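/- Let (M, η) be a contact manifold, X a vector field and λ : M → ℝ a function. The pair (X, λ) is an infinitesimal conformal contactomorphism (L_X η = −λ η) if and only if the image of the section (X, λ) : M → TM × ℝ is a Legendrian submanifold of (TM × ℝ, η^T), where η^T = u η^V + η^C. -/

import Mathlib

noncomputable section

/-- Model of a (2n+1)-dimensional manifold chart. -/
abbrev Vec (N : ℕ) := Fin N → ℝ

/-- The exterior derivative dη of a one-form η, evaluated at x on (v, w). -/
def dEtaG {N : ℕ} (η : Vec N → (Vec N →L[ℝ] ℝ)) (x v w : Vec N) : ℝ :=
  fderiv ℝ (fun y => η y w) x v - fderiv ℝ (fun y => η y v) x w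

/-- The Lie derivative L_X η of a one-form η along a vector field X, at x on v. -/
def lieD {N : ℕ} (X : Vec N → Vec N) (η : Vec N → (Vec N →L[ℝ] ℝ)) (x v : Vec N) : ℝ :=
  fderiv ℝ (fun y => η y v) x (X x) + η x (fderiv ℝ X x v)

/-- The tangent contact form η^T = u η^V + η^C on TM × ℝ, at the point (x, ẋ, u)
evaluated on a tangent vector (a, b, c): η^T = u·η_x(a) + (D_xη(ẋ))(a) + η_x(b). -/
def etaTanG {N : ℕ} (η : Vec N → (Vec N →L[ℝ] ℝ))
    (pt : Vec N × Vec N × ℝ) (v : Vec N × Vec N × ℝ) : ℝ :=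
  pt.2.2 * η pt.1 v.1 + (fderiv ℝ η pt.1 pt.2.1) v.1 + η pt.1 v.2.1

/-- for a contact manifold (M, η), a vector field X and a function λ, the
pair (X, λ) is an infinitesimal conformal contactomorphism (L_X η = −λ η) if and only if
the image of the section m ↦ (m, X(m), λ(m)) of TM × ℝ → M is a Legendrian submanifold of
(TM × ℝ, η^T), i.e. the section is an integral map of ker η^T (its image is an
N-dimensional graph). -/
theorem conformal_contact_iff_legendrian {N : ℕ}
    (η : Vec N → (Vec N →L[ℝ] ℝ)) (hη : ContDiff ℝ (⊤ : ℕ∞) η)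
    (hcontact : ∀ x v, η x v = 0 → (∀ w, dEtaG η x v w = 0) → v = 0)
    (X : Vec N → Vec N) (hX : ContDiff ℝ (⊤ : ℕ∞) X)
    (lam : Vec N → ℝ) (hlam : ContDiff ℝ (⊤ : ℕ∞) lam) :
    (∀ x v, lieD X η x v = -lam x * η x v) ↔
    (∀ (m : Vec N) (w : Vec N),
      etaTanG η (m, X m, lam m) (fderiv ℝ (fun y => (y, X y, lam y)) m w) = 0) := by

  have hDtriple : ∀ m w, fderiv ℝ (fun y => (y, X y, lam y)) m w
      = ((w, fderiv ℝ X m w, fderiv ℝ lam m w) : Vec N × Vec N × ℝ) := by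
    intro m w
    have h := HasFDerivAt.prodMk (hasFDerivAt_id m)
      (HasFDerivAt.prodMk ((hX.differentiable (by simp) m).hasFDerivAt)
        ((hlam.differentiable (by simp) m).hasFDerivAt))
    simp only [id] at h
    rw [h.fderiv]; rfl
  have hDeval : ∀ (m w : Vec N), fderiv ℝ (fun y => η y w) m = (fderiv ℝ η m).flip w := by
    intro m w
    rw [fderiv_clm_apply (hη.differentiable (by simp) m) (differentiableAt_const w)]
    ext v; simp
  have key : ∀ m w, etaTanG η (m, X m, lam m) (fderiv ℝ (fun y => (y, X y, lam y)) m w)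
      = lam m * η m w + lieD X η m w := by
    intro m w
    rw [hDtriple]
    simp only [etaTanG, lieD, hDeval]
    simp [ContinuousLinearMap.flip_apply]
    ring
  constructor
  · intro h m w
    rw [key, h m w]; ring
  · intro h x v
    have := h x v
    rw [key] at this
    linarith
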